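/- arXiv:1212.4306 — 10 statements merged into one kernel-verified Lean document; each statement's English description precedes it below -/
import Mathlib

section
/- Let G be a finite group and b(G) the size of the largest conjugacy class of G. Then Pr(G) ≥ (1/b(G))·(1 + (b(G) - 1)/|G : Z(G)|), where Pr(G) is the commuting probability of G. -/
/-- The commuting probability of a finite group. -/
noncomputable def commProb' (G : Type*) [Group G] : ℚ :=
  (Nat.card {p : G × G // p.1 * p.2 = p.2 * p.1} : ℚ) / (Nat.card G : ℚ) ^ 2

/-- The size of the largest conjugacy class. -/
noncomputable def bG (G : Type*) [Group G] [Fintype G] : ℕ :=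
  Finset.univ.sup fun x : G => Nat.card {z : G // IsConj x z}

/-!
Every central element is its own conjugacy class, and every other class has at most `b`
elements, so the class equation gives `|G| ≤ |Z(G)| + (k(G) - |Z(G)|) b`, where `k(G)` is the
number of conjugacy classes. Since `Pr(G) = k(G) / |G|` and `|G : Z(G)| = |G| / |Z(G)|`, this
rearranges to the claimed bound.
-/

namespace ConjClasses

variable {G : Type*} [Group G]

theorem nat_card_carrier_mk (x : G) : Nat.card (ConjClasses.mk x).carrier =
    Nat.card {z : G // IsConj x z} :=
  Nat.card_congr <| Equiv.subtypeEquivRight fun z => by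
    rw [mem_carrier_iff_mk_eq, mk_eq_mk_iff_isConj, isConj_comm]

variable [Finite G]

theorem nat_card_eq_nat_card_center_add_ncard_noncenter :
    Nat.card (ConjClasses G) = Nat.card (Subgroup.center G) + (noncenter G).ncard := by
  have hcenter : Nat.card (Subgroup.center G) = ((noncenter G)ᶜ).ncard := by
    rw [← Nat.card_coe_set_eq]
    exact Nat.card_congr ((mk_bijOn G).equiv _)
  rw [hcenter, add_comm, Set.ncard_add_ncard_compl]

theorem nat_card_le_nat_card_center_add_ncard_noncenter_mul {b : ℕ}
    (hb : ∀ x : G, Nat.card {z : G // IsConj x z} ≤ b) :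
    Nat.card G ≤ Nat.card (Subgroup.center G) + (noncenter G).ncard * b := by
  rw [← Group.nat_card_center_add_sum_card_noncenter_eq_card G]
  gcongr
  have hfin := (noncenter G).toFinite
  calc ∑ᶠ c ∈ noncenter G, Nat.card c.carrier
      = ∑ c ∈ hfin.toFinset, Nat.card c.carrier := finsum_mem_eq_finite_toFinset_sum _ hfin
    _ ≤ hfin.toFinset.card • b := Finset.sum_le_card_nsmul _ _ _ fun c _ => by
        obtain ⟨x, rfl⟩ := c.exists_rep
        exact (nat_card_carrier_mk x).trans_le (hb x)
    _ = (noncenter G).ncard * b := by rw [Set.ncard_eq_toFinset_card _ hfin, smul_eq_mul]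

theorem nat_card_add_nat_card_center_mul_le {b : ℕ}
    (hb : ∀ x : G, Nat.card {z : G // IsConj x z} ≤ b) :
    Nat.card G + Nat.card (Subgroup.center G) * b ≤
      Nat.card (ConjClasses G) * b + Nat.card (Subgroup.center G) := by
  have := nat_card_le_nat_card_center_add_ncard_noncenter_mul hb
  rw [nat_card_eq_nat_card_center_add_ncard_noncenter, add_mul]
  lia

end ConjClasses

theorem le_commProb_of_card_isConj_le {G : Type*} [Group G] [Finite G] {b : ℕ}
    (hb : ∀ x : G, Nat.card {z : G // IsConj x z} ≤ b) :
    1 / (b : ℚ) * (1 + ((b : ℚ) - 1) / ((Subgroup.center G).index : ℚ)) ≤ commProb G := by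
  have : Nonempty {z : G // IsConj 1 z} := ⟨⟨1, .refl 1⟩⟩
  have hb_pos : 0 < b := (Nat.card_pos (α := {z : G // IsConj 1 z})).trans_le (hb 1)
  have hG : 0 < Nat.card G := Nat.card_pos
  have hZ : 0 < Nat.card (Subgroup.center G) := Nat.card_pos
  have hZ_index : ((Subgroup.center G).index : ℚ) =
      Nat.card G / Nat.card (Subgroup.center G) := by
    rw [← Subgroup.card_mul_index (Subgroup.center G)]
    push_cast
    field_simp
  have hcount : (Nat.card G : ℚ) + Nat.card (Subgroup.center G) * b ≤
      Nat.card (ConjClasses G) * b + Nat.card (Subgroup.center G) := by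
    exact_mod_cast ConjClasses.nat_card_add_nat_card_center_mul_le hb
  rw [commProb_def', hZ_index, div_div_eq_mul_div]
  field_simp
  linarith

theorem stmt_3 {G : Type*} [Group G] [Fintype G] :
    commProb' G ≥
      (1 / (bG G : ℚ)) * (1 + ((bG G : ℚ) - 1) / ((Subgroup.center G).index : ℚ)) :=
  -- `commProb' G` unfolds to Mathlib's `commProb G`, since `Commute a b` is `a * b = b * a`.
  le_commProb_of_card_isConj_le fun x =>
    Finset.le_sup (f := fun x : G => Nat.card {z : G // IsConj x z}) (Finset.mem_univ x)
end

section
/- Let G be a finite group with b(G) its largest conjugacy class size. Then Pr(G) = (1/b(G))·(1 + (b(G)-1)/|G : Z(G)|) if and only if |x^G| = b(G) for all x ∈ G \ Z(G). -/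
/-!
For `x ∈ G` the orbit–stabilizer theorem gives `|x^G| · |C_G(x)| = |G|`, so `b(G) · |C_G(x)| ≥ |G|`
with equality exactly when `|x^G| = b(G)`, while `|C_G(x)| = |G|` for central `x`. Summing
`b(G) · |C_G(x)|` over `G` counts `b(G)` times the commuting pairs and is therefore at least
`|Z(G)| · b(G) · |G| + (|G| - |Z(G)|) · |G|`, which is `b(G) · |G|²` times the right-hand side of the
formula. A sum of termwise inequalities is an equality iff every term is, i.e. iff every
noncentral class has size `b(G)`.
-/

open Finset

section Group

variable {G : Type*} [Group G]

theorem card_isConj_mul_card_commute (x : G) :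
    Nat.card {z : G // IsConj x z} * Nat.card {y : G // x * y = y * x} = Nat.card G := by
  have orbit_equiv : {z : G // IsConj x z} ≃ MulAction.orbit (ConjAct G) x :=
    Equiv.subtypeEquivRight fun z => by rw [ConjAct.mem_orbit_conjAct, isConj_comm]
  have stabilizer_equiv : {y : G // x * y = y * x} ≃ MulAction.stabilizer (ConjAct G) x :=
    ConjAct.toConjAct.toEquiv.subtypeEquiv fun y => by
      rw [MulEquiv.toEquiv_eq_coe, MulEquiv.coe_toEquiv, MulAction.mem_stabilizer_iff,
        ConjAct.toConjAct_smul, mul_inv_eq_iff_eq_mul, eq_comm]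
  rw [Nat.card_congr orbit_equiv, Nat.card_congr stabilizer_equiv, ← Nat.card_prod,
    Nat.card_congr (MulAction.orbitProdStabilizerEquivGroup (ConjAct G) x)]
  rfl

theorem card_commute_of_mem_center {x : G} (hx : x ∈ Subgroup.center G) :
    Nat.card {y : G // x * y = y * x} = Nat.card G :=
  Nat.card_congr (Equiv.subtypeUnivEquiv fun y => (Subgroup.mem_center_iff.mp hx y).symm)

theorem card_commute_pos [Finite G] (x : G) : 0 < Nat.card {y : G // x * y = y * x} :=
  have : Nonempty {y : G // x * y = y * x} := ⟨⟨1, by simp⟩⟩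
  Nat.card_pos

theorem card_commPairs_eq_sum_card_commute [Fintype G] :
    Nat.card {p : G × G // p.1 * p.2 = p.2 * p.1} =
      ∑ x : G, Nat.card {y : G // x * y = y * x} := by
  rw [Nat.card_congr (Equiv.subtypeProdEquivSigmaSubtype fun a b : G => a * b = b * a),
    Nat.card_sigma]

end Group

section MaxClassSize

variable {G : Type*} [Group G] [Fintype G]

theorem card_isConj_le_bG (x : G) : Nat.card {z : G // IsConj x z} ≤ bG G :=
  Finset.le_sup (f := fun x : G => Nat.card {z : G // IsConj x z}) (mem_univ x)

theorem bG_pos : 0 < bG G :=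
  have : Nonempty {z : G // IsConj 1 z} := ⟨⟨1, IsConj.refl 1⟩⟩
  Nat.card_pos.trans_le (card_isConj_le_bG 1)

theorem card_le_bG_mul_card_commute (x : G) :
    Nat.card G ≤ bG G * Nat.card {y : G // x * y = y * x} := by
  rw [← card_isConj_mul_card_commute x]
  exact Nat.mul_le_mul_right _ (card_isConj_le_bG x)

theorem card_eq_bG_mul_card_commute_iff (x : G) :
    Nat.card G = bG G * Nat.card {y : G // x * y = y * x} ↔
      Nat.card {z : G // IsConj x z} = bG G := by
  rw [← card_isConj_mul_card_commute x, Nat.mul_left_inj (card_commute_pos x).ne']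

theorem ite_mem_center_le_bG_mul_card_commute [DecidablePred (· ∈ Subgroup.center G)] (x : G) :
    (if x ∈ Subgroup.center G then bG G * Nat.card G else Nat.card G) ≤
      bG G * Nat.card {y : G // x * y = y * x} := by
  split_ifs with hx
  · rw [card_commute_of_mem_center hx]
  · exact card_le_bG_mul_card_commute x

theorem bG_mul_card_commPairs_eq_sum_iff [DecidablePred (· ∈ Subgroup.center G)] :
    bG G * Nat.card {p : G × G // p.1 * p.2 = p.2 * p.1} =
        ∑ x : G, (if x ∈ Subgroup.center G then bG G * Nat.card G else Nat.card G) ↔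
      ∀ x : G, x ∉ Subgroup.center G → Nat.card {z : G // IsConj x z} = bG G := by
  rw [card_commPairs_eq_sum_card_commute, Finset.mul_sum, eq_comm,
    Finset.sum_eq_sum_iff_of_le fun x _ => ite_mem_center_le_bG_mul_card_commute x]
  refine forall_congr' fun x => ?_
  by_cases hx : x ∈ Subgroup.center G
  · simp [hx, card_commute_of_mem_center hx]
  · simp only [mem_univ, true_implies, hx, if_false, not_false_eq_true,
      card_eq_bG_mul_card_commute_iff]

theorem sum_ite_mem_center [DecidablePred (· ∈ Subgroup.center G)] :
    ∑ x : G, (if x ∈ Subgroup.center G then (bG G * Nat.card G : ℚ) else Nat.card G) =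
      Nat.card G * (Nat.card G + (bG G - 1) * Nat.card (Subgroup.center G)) := by
  have hcenter : #{x | x ∈ Subgroup.center G} = Nat.card (Subgroup.center G) := by
    rw [Nat.card_eq_fintype_card, Fintype.card_subtype]
  have hsplit := card_filter_add_card_filter_not (s := univ) (· ∈ Subgroup.center G)
  rw [hcenter, card_univ, ← Nat.card_eq_fintype_card] at hsplit
  rw [sum_ite, sum_const, sum_const, nsmul_eq_mul, nsmul_eq_mul, hcenter, ← hsplit]
  push_cast
  ring

end MaxClassSize

theorem div_sq_eq_one_div_mul_one_add_iff {K : Type*} [Field K] {P N Z b : K} (hN : N ≠ 0)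
    (hb : b ≠ 0) :
    P / N ^ 2 = 1 / b * (1 + (b - 1) / (N / Z)) ↔ b * P = N * (N + (b - 1) * Z) := by
  rw [div_div_eq_mul_div]
  field_simp

theorem stmt_5 {G : Type*} [Group G] [Fintype G] :
    commProb' G =
        (1 / (bG G : ℚ)) * (1 + ((bG G : ℚ) - 1) / ((Subgroup.center G).index : ℚ)) ↔
      ∀ x : G, x ∉ Subgroup.center G → Nat.card {z : G // IsConj x z} = bG G := by
  classical
  have hG : (Nat.card G : ℚ) ≠ 0 := Nat.cast_ne_zero.mpr Nat.card_pos.ne'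
  have hZ : (Nat.card (Subgroup.center G) : ℚ) ≠ 0 := Nat.cast_ne_zero.mpr Nat.card_pos.ne'
  have hindex : ((Subgroup.center G).index : ℚ) = Nat.card G / Nat.card (Subgroup.center G) := by
    rw [eq_div_iff hZ, ← Nat.cast_mul, Subgroup.index_mul_card]
  rw [commProb', hindex, div_sq_eq_one_div_mul_one_add_iff hG
    (by exact_mod_cast bG_pos.ne'), ← sum_ite_mem_center, ← bG_mul_card_commPairs_eq_sum_iff]
  exact_mod_cast Iff.rfl
end

section
/- Let G and H be isoclinic finite groups with isoclinism (α, β). Then for every g ∈ γ₂(G), Pr_g(G) = Pr_{β(g)}(H). -/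
lemma mem_commutator_of {G : Type*} [Group G] (x y : G) :
    x⁻¹ * y⁻¹ * x * y ∈ commutator G := by
  have h := Subgroup.commutator_mem_commutator (Subgroup.mem_top x⁻¹) (Subgroup.mem_top y⁻¹)
  show x⁻¹ * y⁻¹ * x * y ∈ ⁅(⊤ : Subgroup G), ⊤⁆
  simpa [commutatorElement_def, mul_assoc] using h

/-- An isoclinism between two groups. -/
structure Isoclinism (G H : Type*) [Group G] [Group H] where
  α : (G ⧸ Subgroup.center G) ≃* (H ⧸ Subgroup.center H)
  β : (commutator G) ≃* (commutator H)
  compat : ∀ (x y : G) (x' y' : H),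
    α (x : G ⧸ Subgroup.center G) = (x' : H ⧸ Subgroup.center H) →
    α (y : G ⧸ Subgroup.center G) = (y' : H ⧸ Subgroup.center H) →
    (β ⟨x⁻¹ * y⁻¹ * x * y, mem_commutator_of x y⟩ : H) = x'⁻¹ * y'⁻¹ * x' * y'

/-- Probability that a pair of elements has commutator equal to `g`. -/
noncomputable def Prg (G : Type*) [Group G] (g : G) : ℚ :=
  (Nat.card {p : G × G // p.1⁻¹ * p.2⁻¹ * p.1 * p.2 = g} : ℚ) / (Nat.card G : ℚ) ^ 2

/-! The commutator map `(x, y) ↦ x⁻¹ y⁻¹ x y` factors through `G/Z(G) × G/Z(G)`, and every fibre of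
`G × G → G/Z(G) × G/Z(G)` has `|Z(G)|²` elements, so `Pr_g(G)` is the proportion of pairs in
`G/Z(G) × G/Z(G)` whose induced commutator is `g`. An isoclinism `(α, β)` maps these pairs for `g`
bijectively (via `α × α`) onto those for `β g`, and `|G/Z(G)| = |H/Z(H)|`. -/

open Subgroup QuotientGroup

theorem QuotientGroup.card_preimage_prodMap_mk {G H : Type*} [Group G] [Group H]
    (A : Subgroup G) (B : Subgroup H) (t : Set ((G ⧸ A) × (H ⧸ B))) :
    Nat.card (Prod.map ((↑) : G → G ⧸ A) ((↑) : H → H ⧸ B) ⁻¹' t)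
      = Nat.card A * Nat.card B * Nat.card t := by
  have h := QuotientGroup.card_preimage_mk (A.prod B) (prodEquiv A B ⁻¹' t)
  rw [Nat.card_congr (A.prodEquiv B).toEquiv, Nat.card_prod,
    Nat.card_preimage_of_injective (prodEquiv A B).injective (by simp)] at h
  exact h

section CentralCommutator

variable {G : Type*} [Group G]

theorem inv_mul_inv_mul_mul_mul_center_eq {x y z w : G} (hz : z ∈ center G)
    (hw : w ∈ center G) :
    (x * z)⁻¹ * (y * w)⁻¹ * (x * z) * (y * w) = x⁻¹ * y⁻¹ * x * y := by
  have hz' := mem_center_iff.mp hz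
  have hw' := mem_center_iff.mp hw
  calc (x * z)⁻¹ * (y * w)⁻¹ * (x * z) * (y * w)
      = z⁻¹ * (x⁻¹ * w⁻¹ * y⁻¹ * x * z) * y * w := by group
    _ = x⁻¹ * w⁻¹ * (y⁻¹ * x * y * w) := by rw [hz']; group
    _ = x⁻¹ * y⁻¹ * x * y := by rw [hw']; group

variable (G) in
/-- The commutator `x⁻¹ * y⁻¹ * x * y` of the statement (not Mathlib's `⁅x, y⁆`), which only
depends on `x` and `y` modulo the centre. -/
def centralCommutator : G ⧸ center G → G ⧸ center G → G :=
  Quotient.lift₂ (fun x y => x⁻¹ * y⁻¹ * x * y) fun x y x' y' hx hy => by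
    obtain ⟨z, hz, rfl⟩ : ∃ z ∈ center G, x' = x * z :=
      ⟨x⁻¹ * x', leftRel_apply.mp hx, by group⟩
    obtain ⟨w, hw, rfl⟩ : ∃ w ∈ center G, y' = y * w :=
      ⟨y⁻¹ * y', leftRel_apply.mp hy, by group⟩
    exact (inv_mul_inv_mul_mul_mul_center_eq hz hw).symm

theorem centralCommutator_mem_commutator (a b : G ⧸ center G) :
    centralCommutator G a b ∈ commutator G := by
  induction a using QuotientGroup.induction_on
  induction b using QuotientGroup.induction_on
  exact mem_commutator_of _ _

theorem card_inv_mul_inv_mul_mul_eq (g : G) :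
    Nat.card {p : G × G // p.1⁻¹ * p.2⁻¹ * p.1 * p.2 = g}
      = Nat.card (center G) ^ 2 * Nat.card {q : (G ⧸ center G) × (G ⧸ center G) //
          centralCommutator G q.1 q.2 = g} := by
  rw [sq]
  exact card_preimage_prodMap_mk (center G) (center G) {q | centralCommutator G q.1 q.2 = g}

theorem Prg_eq_card_centralCommutator_eq_div [Finite G] (g : G) :
    Prg G g = Nat.card {q : (G ⧸ center G) × (G ⧸ center G) // centralCommutator G q.1 q.2 = g}
      / (Nat.card (G ⧸ center G) : ℚ) ^ 2 := by
  have hZ : (Nat.card (center G) : ℚ) ≠ 0 := by exact_mod_cast Nat.card_pos.ne'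
  rw [Prg, card_inv_mul_inv_mul_mul_eq, card_eq_card_quotient_mul_card_subgroup (center G)]
  push_cast
  field_simp

end CentralCommutator

namespace Isoclinism

variable {G H : Type*} [Group G] [Group H] (I : Isoclinism G H)

theorem β_centralCommutator (a b : G ⧸ center G) :
    (I.β ⟨centralCommutator G a b, centralCommutator_mem_commutator a b⟩ : H)
      = centralCommutator H (I.α a) (I.α b) := by
  induction a using QuotientGroup.induction_on with | H x => ?_
  induction b using QuotientGroup.induction_on with | H y => ?_
  rw [← out_eq' (I.α x), ← out_eq' (I.α y)]
  exact I.compat x y _ _ (out_eq' _).symm (out_eq' _).symm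

def centralCommutatorFiberEquiv (g : commutator G) :
    {q : (G ⧸ center G) × (G ⧸ center G) // centralCommutator G q.1 q.2 = g} ≃
      {q : (H ⧸ center H) × (H ⧸ center H) // centralCommutator H q.1 q.2 = I.β g} :=
  (I.α.toEquiv.prodCongr I.α.toEquiv).subtypeEquiv fun q => by
    rw [Equiv.prodCongr_apply, Prod.map_fst, Prod.map_snd, MulEquiv.toEquiv_eq_coe,
      MulEquiv.coe_toEquiv, ← β_centralCommutator, Subtype.coe_inj,
      I.β.apply_eq_iff_eq, ← Subtype.coe_inj]

end Isoclinism

theorem stmt_7 {G H : Type*} [Group G] [Group H] [Finite G] [Finite H]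
    (I : Isoclinism G H) (g : commutator G) :
    Prg G (g : G) = Prg H ((I.β g : commutator H) : H) := by
  rw [Prg_eq_card_centralCommutator_eq_div, Prg_eq_card_centralCommutator_eq_div,
    Nat.card_congr (I.centralCommutatorFiberEquiv g), Nat.card_congr I.α.toEquiv]
end

section
/- Let H be a finite Camina p-group of nilpotency class 2 with |γ₂(H)| = p^r and |H : Z(H)| = p^{2m}. Then for the identity element, Pr_1(H) = (1/p^r)(1 + (p^r - 1)/p^{2m}), and for every nonidentity commutator h ∈ K(H), Pr_h(H) = (1/p^r)(1 - 1/p^{2m}). -/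
/-- A finite group is a Camina group if `x^G = x·γ₂(G)` for every `x ∉ γ₂(G)`. -/
def IsCamina (G : Type*) [Group G] : Prop :=
  ∀ x : G, x ∉ commutator G → {z : G | IsConj x z} = (fun c => x * c) '' (commutator G : Set G)

/-!
For a Camina group with `γ₂(G) ≤ Z(G)`, every `x ∉ γ₂(G)` makes `y ↦ x⁻¹ y⁻¹ x y` a homomorphism
onto `γ₂(G)`, so each `g ∈ γ₂(G)` is hit `|G| / |γ₂(G)|` times; every `x ∈ γ₂(G)` is central and only
hits `1`, `|G|` times. Summing over `x` gives `Pr_g`. For class exactly two the Camina condition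
also forces `Z(G) = γ₂(G)`, whence `|G| = p^(2m) p^r`.
-/

section

open Subgroup
open scoped commutatorElement

variable {G : Type*} [Group G]

theorem inv_mul_inv_mul_mul_mem_commutator (x y : G) : x⁻¹ * y⁻¹ * x * y ∈ commutator G := by
  rw [show x⁻¹ * y⁻¹ * x * y = ⁅x⁻¹, y⁻¹⁆ by simp [commutatorElement_def], commutator_def]
  exact commutator_mem_commutator (mem_top _) (mem_top _)

theorem inv_mul_inv_mul_mul_eq_one_of_mem_center {x : G} (hx : x ∈ center G) (y : G) :
    x⁻¹ * y⁻¹ * x * y = 1 := by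
  rw [mul_assoc x⁻¹, mem_center_iff.mp hx y⁻¹]
  group

def commutatorHom (hle : commutator G ≤ center G) (x : G) : G →* G where
  toFun y := x⁻¹ * y⁻¹ * x * y
  map_one' := by group
  map_mul' y z := by
    have hy := mem_center_iff.mp (hle (inv_mul_inv_mul_mul_mem_commutator x y))
    calc x⁻¹ * (y * z)⁻¹ * x * (y * z)
        = (x⁻¹ * z⁻¹ * x) * ((x⁻¹ * y⁻¹ * x * y) * z) := by group
      _ = (x⁻¹ * z⁻¹ * x) * (z * (x⁻¹ * y⁻¹ * x * y)) := by rw [hy z]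
      _ = (x⁻¹ * z⁻¹ * x * z) * (x⁻¹ * y⁻¹ * x * y) := by group
      _ = (x⁻¹ * y⁻¹ * x * y) * (x⁻¹ * z⁻¹ * x * z) := hy _

@[simp]
theorem commutatorHom_apply (hle : commutator G ≤ center G) (x y : G) :
    commutatorHom hle x y = x⁻¹ * y⁻¹ * x * y :=
  rfl

theorem IsCamina.range_commutatorHom (hCam : IsCamina G) (hle : commutator G ≤ center G)
    {x : G} (hx : x ∉ commutator G) : (commutatorHom hle x).range = commutator G := by
  refine le_antisymm ?_ fun w hw => ?_
  · rintro _ ⟨y, rfl⟩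
    exact inv_mul_inv_mul_mul_mem_commutator x y
  · have hconj : IsConj x (x * w) := by
      change x * w ∈ {z | IsConj x z}
      rw [hCam x hx]
      exact ⟨w, hw, rfl⟩
    obtain ⟨u, hu⟩ := isConj_iff.mp hconj
    refine ⟨u⁻¹, ?_⟩
    rw [commutatorHom_apply, inv_inv, show x⁻¹ * u * x * u⁻¹ = x⁻¹ * (u * x * u⁻¹) by group, hu,
      inv_mul_cancel_left]

theorem IsCamina.center_le_commutator (hCam : IsCamina G) (hne : commutator G ≠ ⊥) :
    center G ≤ commutator G := by
  intro z hz
  by_contra hzc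
  obtain ⟨⟨c, hc⟩, hc1⟩ := (commutator G).ne_bot_iff_exists_ne_one.mp hne
  have hconj : IsConj z (z * c) := by
    change z * c ∈ {w | IsConj z w}
    rw [hCam z hzc]
    exact ⟨c, hc, rfl⟩
  obtain ⟨u, hu⟩ := isConj_iff.mp hconj
  rw [mem_center_iff.mp hz u, mul_inv_cancel_right, left_eq_mul] at hu
  exact hc1 (Subtype.ext hu)

theorem MonoidHom.card_fiber_mul_card_range {K : Type*} [Group K] [Finite G] (f : G →* K) (a : G) :
    Nat.card {y // f y = f a} * Nat.card f.range = Nat.card G := by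
  rw [← f.ker.card_mul_index, index_ker]
  exact congrArg (· * _) (Nat.card_congr (f.fiberEquivKer a))

theorem Subgroup.sum_eq_of_forall_mem_of_forall_notMem [Fintype G] (K : Subgroup G) {f : G → ℚ}
    {a b : ℚ} (ha : ∀ x ∈ K, f x = a) (hb : ∀ x ∉ K, f x = b) :
    ∑ x, f x = Nat.card K * a + (Nat.card G - Nat.card K) * b := by
  classical
  have hK : (Finset.univ.filter (· ∈ K)).card = Nat.card K := by
    rw [Nat.card_eq_fintype_card, Fintype.card_subtype]
  have hcompl := Finset.card_filter_add_card_filter_not (s := Finset.univ) (· ∈ K)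
  rw [hK, Finset.card_univ, ← Nat.card_eq_fintype_card] at hcompl
  rw [← Finset.sum_filter_add_sum_filter_not _ (· ∈ K), Finset.sum_congr rfl fun x hx => ha x
    (Finset.mem_filter.mp hx).2, Finset.sum_congr rfl fun x hx => hb x (Finset.mem_filter.mp hx).2,
    Finset.sum_const, Finset.sum_const, nsmul_eq_mul, nsmul_eq_mul, hK, ← hcompl]
  push_cast
  ring

theorem card_commutatorFiber_one_of_mem_center [Finite G] {x : G} (hx : x ∈ center G) :
    Nat.card {y // x⁻¹ * y⁻¹ * x * y = 1} = Nat.card G := by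
  simp [inv_mul_inv_mul_mul_eq_one_of_mem_center hx]

theorem card_commutatorFiber_of_mem_center_of_ne_one {x g : G} (hx : x ∈ center G) (hg : g ≠ 1) :
    Nat.card {y // x⁻¹ * y⁻¹ * x * y = g} = 0 := by
  have : IsEmpty {y // x⁻¹ * y⁻¹ * x * y = g} :=
    ⟨fun y => hg (y.2 ▸ inv_mul_inv_mul_mul_eq_one_of_mem_center hx y)⟩
  exact Nat.card_of_isEmpty

theorem IsCamina.card_commutatorFiber_eq_div [Finite G] (hCam : IsCamina G)
    (hle : commutator G ≤ center G) {x g : G} (hx : x ∉ commutator G) (hg : g ∈ commutator G) :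
    (Nat.card {y // x⁻¹ * y⁻¹ * x * y = g} : ℚ) = Nat.card G / Nat.card (commutator G) := by
  have hrange := hCam.range_commutatorHom hle hx
  obtain ⟨a, rfl⟩ : g ∈ (commutatorHom hle x).range := hrange ▸ hg
  rw [eq_div_iff (by exact_mod_cast Nat.card_pos.ne'), ← Nat.cast_mul, ← hrange]
  exact congrArg Nat.cast ((commutatorHom hle x).card_fiber_mul_card_range a)

theorem card_commutator_eq_sum [Fintype G] (g : G) :
    Nat.card {p : G × G // p.1⁻¹ * p.2⁻¹ * p.1 * p.2 = g} =
      ∑ x : G, Nat.card {y // x⁻¹ * y⁻¹ * x * y = g} := by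
  rw [Nat.card_congr (Equiv.subtypeProdEquivSigmaSubtype fun x y : G => x⁻¹ * y⁻¹ * x * y = g),
    Nat.card_sigma]

theorem IsCamina.prg_one [Finite G] (hCam : IsCamina G) (hle : commutator G ≤ center G) :
    Prg G 1 = 1 / Nat.card (commutator G) *
      (1 + (Nat.card (commutator G) - 1) * Nat.card (commutator G) / Nat.card G) := by
  have := Fintype.ofFinite G
  have hsum := (commutator G).sum_eq_of_forall_mem_of_forall_notMem
    (f := fun x => (Nat.card {y // x⁻¹ * y⁻¹ * x * y = 1} : ℚ)) (a := Nat.card G)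
    (b := Nat.card G / Nat.card (commutator G))
    (fun x hx => by rw [card_commutatorFiber_one_of_mem_center (hle hx)])
    (fun x hx => hCam.card_commutatorFiber_eq_div hle hx (one_mem _))
  rw [Prg, card_commutator_eq_sum, Nat.cast_sum, hsum]
  field_simp
  ring

theorem IsCamina.prg_of_mem_of_ne_one [Finite G] (hCam : IsCamina G)
    (hle : commutator G ≤ center G) {g : G} (hg : g ∈ commutator G) (hg1 : g ≠ 1) :
    Prg G g = 1 / Nat.card (commutator G) * (1 - Nat.card (commutator G) / Nat.card G) := by
  have := Fintype.ofFinite G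
  have hsum := (commutator G).sum_eq_of_forall_mem_of_forall_notMem
    (f := fun x => (Nat.card {y // x⁻¹ * y⁻¹ * x * y = g} : ℚ)) (a := 0)
    (b := Nat.card G / Nat.card (commutator G))
    (fun x hx => by rw [card_commutatorFiber_of_mem_center_of_ne_one (hle hx) hg1, Nat.cast_zero])
    (fun x hx => hCam.card_commutatorFiber_eq_div hle hx hg)
  rw [Prg, card_commutator_eq_sum, Nat.cast_sum, hsum]
  field_simp
  ring

theorem commutator_le_center_of_nilpotencyClass_le_two [Group.IsNilpotent G]
    (h : Group.nilpotencyClass G ≤ 2) : commutator G ≤ center G := by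
  have h2 : ⁅commutator G, (⊤ : Subgroup G)⁆ = ⊥ :=
    Subgroup.lowerCentralSeries_eq_bot_iff_nilpotencyClass_le.mpr h
  simpa [centralizer_univ] using commutator_eq_bot_iff_le_centralizer.mp h2

theorem commutator_ne_bot_of_one_lt_nilpotencyClass [Group.IsNilpotent G]
    (h : 1 < Group.nilpotencyClass G) : commutator G ≠ ⊥ := by
  rw [← top_lowerCentralSeries_one, Ne, Subgroup.lowerCentralSeries_eq_bot_iff_nilpotencyClass_le]
  omega

end

theorem stmt_8_general {H : Type*} [Group H] [Finite H] (p r m : ℕ)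
    (hCam : IsCamina H) [Group.IsNilpotent H]
    (hclass : Group.nilpotencyClass H = 2)
    (hγ : Nat.card (commutator H) = p ^ r)
    (hZ : (Subgroup.center H).index = p ^ (2 * m)) :
    Prg H 1 = (1 / (p : ℚ) ^ r) * (1 + ((p : ℚ) ^ r - 1) / (p : ℚ) ^ (2 * m)) ∧
      ∀ h : H, h ≠ 1 → (∃ a b : H, a⁻¹ * b⁻¹ * a * b = h) →
        Prg H h = (1 / (p : ℚ) ^ r) * (1 - 1 / (p : ℚ) ^ (2 * m)) := by
  have hle := commutator_le_center_of_nilpotencyClass_le_two hclass.le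
  have hcenter : Subgroup.center H = commutator H :=
    le_antisymm (hCam.center_le_commutator (commutator_ne_bot_of_one_lt_nilpotencyClass (by omega)))
      hle
  have hcard : Nat.card H = p ^ (2 * m) * p ^ r := by
    rw [← (Subgroup.center H).index_mul_card, hZ, hcenter, hγ]
  have hr : ((p : ℚ) ^ r) ≠ 0 := by exact_mod_cast hγ ▸ Nat.card_pos.ne'
  have hm : ((p : ℚ) ^ (2 * m)) ≠ 0 := by
    exact_mod_cast hZ ▸ (Subgroup.center H).index_ne_zero_of_finite
  refine ⟨?_, fun h hh1 ⟨a, b, hab⟩ => ?_⟩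
  · rw [hCam.prg_one hle, hcard, hγ]
    push_cast
    field_simp
  · rw [hCam.prg_of_mem_of_ne_one hle (hab ▸ inv_mul_inv_mul_mul_mem_commutator a b) hh1, hcard, hγ]
    push_cast
    field_simp

theorem stmt_8 {H : Type*} [Group H] [Finite H] (p r m : ℕ) [Fact p.Prime]
    (hp : IsPGroup p H) (hCam : IsCamina H) [Group.IsNilpotent H]
    (hclass : Group.nilpotencyClass H = 2)
    (hγ : Nat.card (commutator H) = p ^ r)
    (hZ : (Subgroup.center H).index = p ^ (2 * m)) :
    Prg H 1 = (1 / (p : ℚ) ^ r) * (1 + ((p : ℚ) ^ r - 1) / (p : ℚ) ^ (2 * m)) ∧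
      ∀ h : H, h ≠ 1 → (∃ a b : H, a⁻¹ * b⁻¹ * a * b = h) →
        Prg H h = (1 / (p : ℚ) ^ r) * (1 - 1 / (p : ℚ) ^ (2 * m)) :=
  stmt_8_general p r m hCam hclass hγ hZ
end

section
/- Let G be a finite non-abelian group such that b(G) = |γ₂(G)| and G has only two conjugacy class sizes 1 and b(G). Then the nilpotency class of G is exactly 2. -/
open Subgroup

section

variable {G : Type*} [Group G]

theorem mem_center_of_card_isConj_eq_one {a : G} (h : Nat.card {z : G // IsConj a z} = 1) :
    a ∈ center G := by
  have : Subsingleton {z : G // IsConj a z} := (Nat.card_eq_one_iff_unique.mp h).1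
  refine mem_center_iff.mpr fun g => ?_
  have hconj : g * a * g⁻¹ = a :=
    congrArg Subtype.val (Subsingleton.elim (⟨g * a * g⁻¹, isConj_iff.mpr ⟨g, rfl⟩⟩ :
      {z : G // IsConj a z}) ⟨a, IsConj.refl a⟩)
  calc g * a = g * a * g⁻¹ * g := by group
    _ = a * g := by rw [hconj]

theorem eq_one_of_card_isConj_eq_card [Finite G] {N : Subgroup G} [N.Normal] {a : G}
    (ha : a ∈ N) (h : Nat.card {z : G // IsConj a z} = Nat.card N) : a = 1 := by
  have hsub : {z | IsConj a z} ⊆ (N : Set G) := fun z hz => by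
    obtain ⟨c, rfl⟩ := isConj_iff.mp hz
    exact Normal.conj_mem inferInstance a ha c
  have hclass : {z | IsConj a z} = (N : Set G) :=
    Set.eq_of_subset_of_ncard_le hsub (by
      rw [← Nat.card_coe_set_eq, ← Nat.card_coe_set_eq]; exact h.ge)
  have hone : IsConj a 1 := by
    change (1 : G) ∈ {z | IsConj a z}
    rw [hclass]; exact N.one_mem
  exact isConj_one_left.mp hone

theorem le_center_of_card_isConj_eq_one_or_card [Finite G] {N : Subgroup G} [N.Normal]
    (h : ∀ a ∈ N,
      Nat.card {z : G // IsConj a z} = 1 ∨ Nat.card {z : G // IsConj a z} = Nat.card N) :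
    N ≤ center G := by
  intro a ha
  rcases h a ha with hcentral | hfull
  · exact mem_center_of_card_isConj_eq_one hcentral
  · rw [eq_one_of_card_isConj_eq_card ha hfull]
    exact one_mem _

theorem nilpotencyClass_eq_two_of_commutator_le_center (hcen : commutator G ≤ center G)
    (hna : ∃ x y : G, x * y ≠ y * x) :
    ∃ _ : Group.IsNilpotent G, Group.nilpotencyClass G = 2 := by
  have hbot : (⊤ : Subgroup G).lowerCentralSeries 2 = ⊥ := by
    rw [Subgroup.lowerCentralSeries_succ, top_lowerCentralSeries_one,
      commutator_eq_bot_iff_le_centralizer]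
    exact hcen.trans (center_le_centralizer _)
  have hn : Group.IsNilpotent G := Subgroup.nilpotent_iff_lowerCentralSeries.mpr ⟨2, hbot⟩
  have hle : Group.nilpotencyClass G ≤ 2 :=
    Subgroup.lowerCentralSeries_eq_bot_iff_nilpotencyClass_le.mp hbot
  have hgt : ¬ Group.nilpotencyClass G ≤ 1 := fun h => by
    obtain ⟨x, y, hxy⟩ := hna
    have : IsMulCommutative G := Group.IsNilpotent.nilpotencyClass_le_one_iff.mp h
    exact hxy (this.is_comm.comm x y)
  exact ⟨hn, by omega⟩

end

theorem stmt_11 {G : Type*} [Group G] [Fintype G]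
    (hna : ∃ x y : G, x * y ≠ y * x)
    (hb : bG G = Nat.card (commutator G))
    (htwo : ∀ x : G,
      Nat.card {z : G // IsConj x z} = 1 ∨ Nat.card {z : G // IsConj x z} = bG G) :
    ∃ hn : Group.IsNilpotent G, @Group.nilpotencyClass G _ = 2 :=
  nilpotencyClass_eq_two_of_commutator_le_center
    (le_center_of_card_isConj_eq_one_or_card fun a _ => hb ▸ htwo a) hna
end

section
/- Let G be a finite p-group of nilpotency class 2, minimally generated by x₁,…,x_d, with γ₂(G) of exponent p. Let g₁ = Π x_i^{α_i} and g₂ = Π x_j^{β_j} with 0 ≤ α_i, β_j ≤ p−1 and [g₁,g₂] ≠ 1. Then there exists a minimal generating set of G containing both g₁ and g₂. -/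
/-!
Let `N = G^p [G, G]`. Modulo `N` the group is a vector space over `ZMod p`, and in class 2 with
`[G, G]` of exponent `p` the subgroup `N` is central, because `[g, a^p] = [g, a]^p = 1`. A central
subgroup of `G^p [G, G]` consists of non-generators: if `K ⊔ N = G`, then `G ⧸ K` is an abelian
`p`-group in which every element is a `p`-th power, so it is trivial. Hence a subset of `G` on
which the projection is injective with image a basis of `G ⧸ N` is a minimal generating set.
Non-commuting `g₁, g₂` have linearly independent images, since `ḡ₂ = c • ḡ₁` would make `g₂` a
power of `g₁` times a central element; extending their images to a basis gives the set.
-/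

/-- A minimal generating set of a group. -/
def IsMinGen {G : Type*} [Group G] (s : Set G) : Prop :=
  Subgroup.closure s = ⊤ ∧ ∀ t : Set G, t ⊂ s → Subgroup.closure t ≠ ⊤

open Subgroup
open scoped commutatorElement

section NonGenerators

variable {G : Type*} [Group G] {p : ℕ}

theorem pow_mem_center_of_commutator_le_center (hclass : commutator G ≤ center G)
    (hexp : ∀ c ∈ commutator G, c ^ p = 1) (a : G) : a ^ p ∈ center G := by
  rw [mem_center_iff]
  intro g
  have hga : ⁅g, a⁆ ∈ commutator G := commutator_mem_commutator (mem_top g) (mem_top a)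
  have hconj : g * a * g⁻¹ = ⁅g, a⁆ * a := by rw [commutatorElement_def]; group
  refine mul_inv_eq_iff_eq_mul.mp ?_
  calc g * a ^ p * g⁻¹ = (⁅g, a⁆ * a) ^ p := by rw [← conj_pow, hconj]
    _ = ⁅g, a⁆ ^ p * a ^ p := (Commute.symm (mem_center_iff.mp (hclass hga) a)).mul_pow p
    _ = a ^ p := by rw [hexp _ hga, one_mul]

theorem IsPGroup.eq_one_of_surjective_pow [Finite G] (hp : IsPGroup p G)
    (hsurj : Function.Surjective (· ^ p : G → G)) (g : G) : g = 1 := by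
  have hinj : Function.Injective (· ^ p : G → G) := Finite.injective_iff_surjective.mpr hsurj
  obtain ⟨n, hn⟩ := hp g
  induction n generalizing g with
  | zero => simpa using hn
  | succ n ih => exact ih g (hinj (by simpa [← pow_mul, ← pow_succ] using hn))

theorem eq_top_of_sup_eq_top_of_le_center [Finite G] (hp : IsPGroup p G) {N K : Subgroup G}
    (hNc : N ≤ center G) (hN : N ≤ commutator G ⊔ closure (Set.range (· ^ p)))
    (hKN : K ⊔ N = ⊤) : K = ⊤ := by
  have : K.Normal := by
    rw [← normalizer_eq_top_iff, eq_top_iff, ← hKN]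
    exact sup_le le_normalizer (hNc.trans (center_le_normalizer _))
  let π := QuotientGroup.mk' K
  have hmap : N.map π = ⊤ := by
    rw [← bot_sup_eq (N.map π), ← QuotientGroup.map_mk'_self K, ← Subgroup.map_sup, hKN,
      map_top_of_surjective _ (QuotientGroup.mk'_surjective K)]
  -- every coset of `K` has a representative in the central subgroup `N`
  let _ : CommGroup (G ⧸ K) :=
    { mul_comm a b := by
        obtain ⟨n, hn, rfl⟩ := mem_map.mp (hmap ▸ mem_top a : a ∈ N.map π)
        obtain ⟨g, rfl⟩ := QuotientGroup.mk'_surjective K b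
        exact (Commute.symm (mem_center_iff.mp (hNc hn) g)).map π }
  have hle : commutator G ⊔ closure (Set.range (· ^ p)) ≤ (powMonoidHom p).range.comap π := by
    refine sup_le ?_ ((closure_le _).mpr ?_)
    · exact Abelianization.commutator_subset_ker _ |>.trans (MonoidHom.ker_le_comap _ _)
    · rintro _ ⟨a, rfl⟩
      exact ⟨π a, (map_pow π a p).symm⟩
  have hsurj : Function.Surjective (· ^ p : G ⧸ K → G ⧸ K) := by
    intro q
    obtain ⟨n, hn, rfl⟩ := mem_map.mp (hmap ▸ mem_top q : q ∈ N.map π)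
    exact hle (hN hn)
  have htriv := (hp.to_quotient K).eq_one_of_surjective_pow hsurj
  rw [← QuotientGroup.subsingleton_iff]
  exact ⟨fun a b => (htriv a).trans (htriv b).symm⟩

end NonGenerators

section BasisTheorem

variable {p : ℕ} {V : Type*} [CommGroup V] [Module (ZMod p) (Additive V)]

theorem closure_eq_top_iff_span_eq_top (B : Set V) :
    closure B = ⊤ ↔ Submodule.span (ZMod p) (Additive.ofMul '' B) = ⊤ := by
  rw [← (Submodule.restrictScalars_injective ℤ _ _).eq_iff, Submodule.restrictScalars_top,
    Submodule.restrictScalars_span ℤ _ ZMod.intCast_surjective,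
    ← Submodule.toAddSubgroup_injective.eq_iff, Submodule.span_int_eq_addSubgroupClosure,
    ← Subgroup.toAddSubgroup.injective.eq_iff, toAddSubgroup_closure, Equiv.image_eq_preimage_symm]
  rfl

variable {G : Type*} [Group G] {φ : G →* V}

-- `hker` says that `φ.ker` consists of non-generators, i.e. lies in the Frattini subgroup.

theorem closure_eq_top_iff_span_image_eq_top (hφ : Function.Surjective φ)
    (hker : ∀ K : Subgroup G, K ⊔ φ.ker = ⊤ → K = ⊤) (s : Set G) :
    closure s = ⊤ ↔ Submodule.span (ZMod p) ((Additive.ofMul ∘ φ) '' s) = ⊤ := by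
  rw [Set.image_comp, ← closure_eq_top_iff_span_eq_top, ← MonoidHom.map_closure,
    ← (comap_injective hφ).eq_iff, comap_map_eq, comap_top]
  exact ⟨fun h => by rw [h, top_sup_eq], hker _⟩

variable [Fact p.Prime]

theorem isMinGen_of_linearIndepOn (hφ : Function.Surjective φ)
    (hker : ∀ K : Subgroup G, K ⊔ φ.ker = ⊤ → K = ⊤) {s : Set G}
    (hli : LinearIndepOn (ZMod p) (Additive.ofMul ∘ φ) s)
    (hspan : Submodule.span (ZMod p) ((Additive.ofMul ∘ φ) '' s) = ⊤) : IsMinGen s := by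
  refine ⟨(closure_eq_top_iff_span_image_eq_top hφ hker s).mpr hspan, fun t hts ht => ?_⟩
  obtain ⟨a, has, hat⟩ := Set.exists_of_ssubset hts
  have hnot : (Additive.ofMul ∘ φ) a ∉
      Submodule.span (ZMod p) ((Additive.ofMul ∘ φ) '' (s \ {a})) :=
    ((hli.mono Set.sdiff_subset).notMem_span_iff).mpr
      ⟨by rwa [Set.insert_sdiff_singleton, Set.insert_eq_of_mem has], by simp⟩
  have hts' : t ⊆ s \ {a} := fun b hbt => ⟨hts.1 hbt, fun hba => hat (hba ▸ hbt)⟩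
  refine hnot (Submodule.span_mono (Set.image_mono hts') ?_)
  rw [(closure_eq_top_iff_span_image_eq_top hφ hker t).mp ht]
  exact Submodule.mem_top

theorem exists_isMinGen_superset (hφ : Function.Surjective φ)
    (hker : ∀ K : Subgroup G, K ⊔ φ.ker = ⊤ → K = ⊤) {u : Set G}
    (hu : LinearIndepOn (ZMod p) (Additive.ofMul ∘ φ) u) : ∃ s, IsMinGen s ∧ u ⊆ s := by
  obtain ⟨s, -, hus, hspan, hli⟩ := exists_linearIndepOn_extension hu (Set.subset_univ u)
  refine ⟨s, isMinGen_of_linearIndepOn hφ hker hli (eq_top_iff.mpr fun v _ => hspan ?_), hus⟩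
  obtain ⟨g, hg⟩ := hφ (Additive.toMul v)
  exact ⟨g, Set.mem_univ g, congrArg Additive.ofMul hg⟩

theorem commute_of_smul_eq (hker : φ.ker ≤ center G) {g h : G} (c : ZMod p)
    (hc : c • Additive.ofMul (φ g) = Additive.ofMul (φ h)) : Commute g h := by
  rw [← ZMod.natCast_zmod_val c, Nat.cast_smul_eq_nsmul, ← ofMul_pow, ← map_pow] at hc
  have hz : (g ^ c.val)⁻¹ * h ∈ φ.ker := (φ.eq_iff).mp (Additive.ofMul.injective hc.symm)
  rw [← mul_inv_cancel_left (g ^ c.val) h]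
  exact ((Commute.refl g).pow_right _).mul_right (mem_center_iff.mp (hker hz) g)

theorem linearIndepOn_pair_of_not_commute (hker : φ.ker ≤ center G) {g h : G}
    (hgh : ¬Commute g h) : LinearIndepOn (ZMod p) (Additive.ofMul ∘ φ) {g, h} := by
  refine (linearIndepOn_pair_iff _ (fun hg => hgh (by rw [hg])) fun h0 => hgh ?_).mpr
    fun c hc => hgh (commute_of_smul_eq hker c hc)
  exact (commute_of_smul_eq hker (0 : ZMod p) (by simpa using h0.symm)).symm

end BasisTheorem

/-- `G ⧸ G^p [G, G]`; for a finite `p`-group this is `G ⧸ Φ(G)`. -/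
abbrev ModPAbelianization (p : ℕ) (G : Type*) [Group G] : Type _ :=
  Abelianization G ⧸ (powMonoidHom p : Abelianization G →* Abelianization G).range

namespace ModPAbelianization

variable (p : ℕ) (G : Type*) [Group G]

instance : Module (ZMod p) (Additive (ModPAbelianization p G)) :=
  AddCommGroup.zmodModule fun x => by
    obtain ⟨a, ha⟩ := QuotientGroup.mk_surjective (Additive.toMul x)
    have hpow : ((a ^ p : Abelianization G) : ModPAbelianization p G) = 1 :=
      (QuotientGroup.eq_one_iff _).mpr ⟨a, rfl⟩
    rw [← ofMul_toMul x, ← ofMul_pow, ← ha, ← QuotientGroup.mk_pow, hpow, ofMul_one]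

def of : G →* ModPAbelianization p G :=
  (QuotientGroup.mk' _).comp Abelianization.of

theorem of_surjective : Function.Surjective (of p G) :=
  (QuotientGroup.mk'_surjective _).comp QuotientGroup.mk_surjective

theorem ker_of_le : (of p G).ker ≤ commutator G ⊔ closure (Set.range (· ^ p)) := by
  intro g hg
  obtain ⟨a, ha⟩ := (QuotientGroup.eq_one_iff _).mp hg
  obtain ⟨b, rfl⟩ := QuotientGroup.mk_surjective a
  have hc : (b ^ p)⁻¹ * g ∈ commutator G := by
    rw [← Abelianization.ker_of, ← MonoidHom.eq_iff, map_pow]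
    exact ha.symm
  rw [sup_comm, ← mul_inv_cancel_left (b ^ p) g]
  exact mul_mem_sup (subset_closure (Set.mem_range_self b)) hc

end ModPAbelianization

theorem stmt_12_general {G : Type*} [Group G] [Finite G] (p : ℕ) [Fact p.Prime]
    (hp : IsPGroup p G) (hclass : commutator G ≤ Subgroup.center G)
    (hexp : ∀ c ∈ commutator G, c ^ p = 1)
    (g₁ g₂ : G)
    (hcomm : g₁⁻¹ * g₂⁻¹ * g₁ * g₂ ≠ 1) :
    ∃ s : Set G, IsMinGen s ∧ g₁ ∈ s ∧ g₂ ∈ s := by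
  have hker : (ModPAbelianization.of p G).ker ≤ center G :=
    (ModPAbelianization.ker_of_le p G).trans <| sup_le hclass <| (closure_le _).mpr <|
      Set.range_subset_iff.mpr (pow_mem_center_of_commutator_le_center hclass hexp)
  have hnc : ¬Commute g₁ g₂ := fun h => hcomm <| by
    rw [← commutatorElement_eq_one_iff_commute.mpr h.inv_inv, commutatorElement_def, inv_inv,
      inv_inv]
  obtain ⟨s, hs, hsub⟩ := exists_isMinGen_superset (ModPAbelianization.of_surjective p G)
    (fun K hK => eq_top_of_sup_eq_top_of_le_center hp hker (ModPAbelianization.ker_of_le p G) hK)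
    (linearIndepOn_pair_of_not_commute (p := p) hker hnc)
  exact ⟨s, hs, hsub (Set.mem_insert _ _), hsub (Set.mem_insert_of_mem _ rfl)⟩

theorem stmt_12 {G : Type*} [Group G] [Finite G] (p : ℕ) [Fact p.Prime]
    (hp : IsPGroup p G) (hclass : commutator G ≤ Subgroup.center G)
    (hexp : ∀ c ∈ commutator G, c ^ p = 1)
    (d : ℕ) (x : Fin d → G) (hinj : Function.Injective x)
    (hgen : IsMinGen (Set.range x))
    (α β : Fin d → ℕ) (hα : ∀ i, α i ≤ p - 1) (hβ : ∀ i, β i ≤ p - 1)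
    (g₁ g₂ : G)
    (hg₁ : g₁ = (List.ofFn fun i => x i ^ α i).prod)
    (hg₂ : g₂ = (List.ofFn fun i => x i ^ β i).prod)
    (hne : g₁ ≠ g₂) (hcomm : g₁⁻¹ * g₂⁻¹ * g₁ * g₂ ≠ 1) :
    ∃ s : Set G, IsMinGen s ∧ g₁ ∈ s ∧ g₂ ∈ s :=
  stmt_12_general p hp hclass hexp g₁ g₂ hcomm
end

section
/- Let G be a finite group and 1 ≠ g ∈ γ₂(G). Then Pr_g(G) < Pr(G). -/
section

variable {G : Type*} [Group G]

theorem card_commutator_eq_le_card_commutator_eq_one [Finite G] (x g : G) :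
    Nat.card {y : G // x⁻¹ * y⁻¹ * x * y = g} ≤ Nat.card {y : G // x⁻¹ * y⁻¹ * x * y = 1} := by
  rcases isEmpty_or_nonempty {y : G // x⁻¹ * y⁻¹ * x * y = g} with _ | ⟨⟨y₀, hy₀⟩⟩
  · simp
  have conj_eq : ∀ y : G, x⁻¹ * y⁻¹ * x * y = g → y⁻¹ * x * y = x * g := by
    intro y hy
    rw [← hy]
    group
  refine Nat.card_le_card_of_injective (fun y => ⟨y.1 * y₀⁻¹, ?_⟩) fun y y' h => ?_
  · calc x⁻¹ * (y.1 * y₀⁻¹)⁻¹ * x * (y.1 * y₀⁻¹)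
          = x⁻¹ * y₀ * (y.1⁻¹ * x * y.1) * y₀⁻¹ := by group
        _ = x⁻¹ * y₀ * (y₀⁻¹ * x * y₀) * y₀⁻¹ := by rw [conj_eq y.1 y.2, conj_eq y₀ hy₀]
        _ = 1 := by group
  · exact Subtype.ext (mul_right_cancel (congrArg Subtype.val h))

theorem card_commutator_eq_eq_sum [Fintype G] (g : G) :
    Nat.card {p : G × G // p.1⁻¹ * p.2⁻¹ * p.1 * p.2 = g} =
      ∑ x, Nat.card {y : G // x⁻¹ * y⁻¹ * x * y = g} := by
  rw [Nat.card_congr (Equiv.subtypeProdEquivSigmaSubtype fun x y : G => x⁻¹ * y⁻¹ * x * y = g),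
    Nat.card_sigma]

theorem card_commutator_eq_lt_card_commutator_eq_one [Finite G] {g : G} (hg : g ≠ 1) :
    Nat.card {p : G × G // p.1⁻¹ * p.2⁻¹ * p.1 * p.2 = g} <
      Nat.card {p : G × G // p.1⁻¹ * p.2⁻¹ * p.1 * p.2 = 1} := by
  have := Fintype.ofFinite G
  rw [card_commutator_eq_eq_sum, card_commutator_eq_eq_sum]
  refine Finset.sum_lt_sum (fun x _ => card_commutator_eq_le_card_commutator_eq_one x g)
    ⟨1, Finset.mem_univ _, ?_⟩
  have : IsEmpty {y : G // (1 : G)⁻¹ * y⁻¹ * 1 * y = g} :=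
    ⟨fun y => hg (by rw [← y.2]; group)⟩
  have : Nonempty {y : G // (1 : G)⁻¹ * y⁻¹ * 1 * y = 1} := ⟨⟨1, by group⟩⟩
  rw [Nat.card_of_isEmpty]
  exact Nat.card_pos

end

theorem stmt_16_general {G : Type*} [Group G] [Finite G] (g : G) (hg1 : g ≠ 1) :
    Prg G g < Prg G 1 := by
  have card_pos : (0 : ℚ) < Nat.card G := by exact_mod_cast Nat.card_pos
  exact div_lt_div_of_pos_right (by exact_mod_cast card_commutator_eq_lt_card_commutator_eq_one hg1)
    (pow_pos card_pos 2)

theorem stmt_16 {G : Type*} [Group G] [Finite G] (g : G) (hg1 : g ≠ 1)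
    (hg : g ∈ commutator G) :
    Prg G g < Prg G 1 :=
  stmt_16_general g hg1
end

section
/- Let G be a finite group, 1 ≠ g ∈ K(G). Then Pr_g(G) = (1/|G|)·Σ_{x ∈ G\Z(G)} 1/|x^G| if and only if g ∈ [x,G] for all x ∈ G \ Z(G). -/
attribute [local instance] Classical.propDecidable

section

variable {G : Type*} [Group G]

lemma card_isConj_mul_card_centralizer (x : G) :
    Nat.card {z : G // IsConj x z} * Nat.card (Subgroup.centralizer ({x} : Set G)) =
      Nat.card G := by
  have e : {z : G // IsConj x z} ≃ MulAction.orbit (ConjAct G) x :=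
    Equiv.subtypeEquivRight fun z => by rw [ConjAct.mem_orbit_conjAct, isConj_comm]
  rw [Nat.card_congr e, Nat.card_coe_set_eq, ← MulAction.index_stabilizer,
    Subgroup.nat_card_centralizer_nat_card_stabilizer, mul_comm, Subgroup.card_mul_index]
  rfl

lemma not_exists_commutator_eq_of_mem_center {x g : G} (hx : x ∈ Subgroup.center G) (hg : g ≠ 1) :
    ¬∃ y : G, x⁻¹ * y⁻¹ * x * y = g := by
  rintro ⟨y, rfl⟩
  apply hg
  rw [mul_assoc x⁻¹, Subgroup.mem_center_iff.mp hx y⁻¹]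
  group

def commutatorFiberEquivCentralizer {x g y₀ : G} (hy₀ : x⁻¹ * y₀⁻¹ * x * y₀ = g) :
    {y : G // x⁻¹ * y⁻¹ * x * y = g} ≃ Subgroup.centralizer ({x} : Set G) where
  toFun y := ⟨y.1 * y₀⁻¹, by
    rw [Subgroup.mem_centralizer_singleton_iff]
    have h : y.1⁻¹ * x * y.1 = y₀⁻¹ * x * y₀ := by
      simpa only [mul_assoc, mul_right_inj] using y.2.trans hy₀.symm
    calc y.1 * y₀⁻¹ * x = y.1 * (y₀⁻¹ * x * y₀) * y₀⁻¹ := by group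
      _ = y.1 * (y.1⁻¹ * x * y.1) * y₀⁻¹ := by rw [h]
      _ = x * (y.1 * y₀⁻¹) := by group⟩
  invFun z := ⟨z.1 * y₀, by
    have hz : z.1 * x = x * z.1 := Subgroup.mem_centralizer_singleton_iff.mp z.2
    calc x⁻¹ * (z.1 * y₀)⁻¹ * x * (z.1 * y₀) = x⁻¹ * y₀⁻¹ * (z.1⁻¹ * (x * z.1)) * y₀ := by group
      _ = g := by rw [← hz, inv_mul_cancel_left, hy₀]⟩
  left_inv y := by ext; simp
  right_inv z := by ext; simp

variable [Finite G]

lemma card_isConj_pos (x : G) : 0 < Nat.card {z : G // IsConj x z} :=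
  have : Nonempty {z : G // IsConj x z} := ⟨⟨x, IsConj.refl x⟩⟩
  Nat.card_pos

lemma card_commutatorFiber_div_card (x g : G) [Decidable (∃ y : G, x⁻¹ * y⁻¹ * x * y = g)] :
    (Nat.card {y : G // x⁻¹ * y⁻¹ * x * y = g} : ℚ) / Nat.card G =
      if ∃ y : G, x⁻¹ * y⁻¹ * x * y = g then (1 : ℚ) / Nat.card {z : G // IsConj x z} else 0 := by
  split_ifs with h
  · obtain ⟨y₀, hy₀⟩ := h
    have hclass : (Nat.card {z : G // IsConj x z} : ℚ) ≠ 0 := by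
      exact_mod_cast (card_isConj_pos x).ne'
    have hcent : (Nat.card (Subgroup.centralizer ({x} : Set G)) : ℚ) ≠ 0 := by
      exact_mod_cast Nat.card_pos.ne'
    rw [Nat.card_congr (commutatorFiberEquivCentralizer hy₀), ← card_isConj_mul_card_centralizer x,
      Nat.cast_mul]
    field_simp
  · have : IsEmpty {y : G // x⁻¹ * y⁻¹ * x * y = g} := ⟨fun y => h ⟨y.1, y.2⟩⟩
    simp

end

section

variable {α : Type*} [Zero α] {P Q : Prop} [Decidable P] [Decidable Q] {c : α}

lemma ite_le_ite_of_imp_not [Preorder α] (hc : 0 ≤ c) (h : Q → ¬P) :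
    (if P then c else 0) ≤ if Q then 0 else c := by
  by_cases hP : P <;> by_cases hQ : Q <;> simp_all

lemma ite_eq_ite_iff_of_imp_not (hc : c ≠ 0) (h : Q → ¬P) :
    ((if P then c else 0) = if Q then 0 else c) ↔ (¬Q → P) := by
  by_cases hP : P <;> by_cases hQ : Q <;> simp_all [eq_comm]

end

lemma Prg_eq_sum {G : Type*} [Group G] [Fintype G] (g : G) :
    Prg G g = (1 / (Nat.card G : ℚ)) *
      ∑ x : G, (if ∃ y : G, x⁻¹ * y⁻¹ * x * y = g then
        (1 : ℚ) / Nat.card {z : G // IsConj x z} else 0) := by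
  have hpairs : Nat.card {p : G × G // p.1⁻¹ * p.2⁻¹ * p.1 * p.2 = g} =
      ∑ x : G, Nat.card {y : G // x⁻¹ * y⁻¹ * x * y = g} := by
    rw [Nat.card_congr (Equiv.subtypeProdEquivSigmaSubtype fun a b : G => a⁻¹ * b⁻¹ * a * b = g),
      Nat.card_sigma]
  rw [Prg, hpairs, Nat.cast_sum, Finset.sum_div, Finset.mul_sum]
  refine Finset.sum_congr rfl fun x _ => ?_
  rw [← card_commutatorFiber_div_card]
  ring

theorem stmt_17_general {G : Type*} [Group G] [Fintype G] (g : G) (hg1 : g ≠ 1) :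
    Prg G g = (1 / (Nat.card G : ℚ)) *
        ∑ x : G, (if x ∈ Subgroup.center G then 0
          else (1 : ℚ) / (Nat.card {z : G // IsConj x z} : ℚ)) ↔
      ∀ x : G, x ∉ Subgroup.center G → ∃ y : G, x⁻¹ * y⁻¹ * x * y = g := by
  have hclass (x : G) : (0 : ℚ) < 1 / Nat.card {z : G // IsConj x z} := by
    have := card_isConj_pos x
    positivity
  have hcentral (x : G) : x ∈ Subgroup.center G → ¬∃ y : G, x⁻¹ * y⁻¹ * x * y = g :=
    fun hx => not_exists_commutator_eq_of_mem_center hx hg1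
  rw [Prg_eq_sum, mul_right_inj' (one_div_ne_zero (by simp)),
    Finset.sum_eq_sum_iff_of_le fun x _ => ite_le_ite_of_imp_not (hclass x).le (hcentral x)]
  simp only [Finset.mem_univ, true_implies]
  exact forall_congr' fun x => ite_eq_ite_iff_of_imp_not (hclass x).ne' (hcentral x)

theorem stmt_17 {G : Type*} [Group G] [Fintype G] (g : G) (hg1 : g ≠ 1)
    (hgK : ∃ a b : G, a⁻¹ * b⁻¹ * a * b = g) :
    Prg G g = (1 / (Nat.card G : ℚ)) *
        ∑ x : G, (if x ∈ Subgroup.center G then 0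
          else (1 : ℚ) / (Nat.card {z : G // IsConj x z} : ℚ)) ↔
      ∀ x : G, x ∉ Subgroup.center G → ∃ y : G, x⁻¹ * y⁻¹ * x * y = g :=
  stmt_17_general g hg1
end

section
/- Let G be a finite group having exactly two conjugacy class sizes, 1 and p, where p is prime. Then Pr(G) > 1/p. -/
namespace ConjClasses

variable {G : Type*} [Monoid G]

theorem ncard_carrier_mk (x : G) :
    (ConjClasses.mk x).carrier.ncard = Nat.card {z : G // IsConj x z} := by
  have hset : (ConjClasses.mk x).carrier = {z : G | IsConj x z} := by
    ext z
    rw [mem_carrier_iff_mk_eq, mk_eq_mk_iff_isConj, Set.mem_ofPred_eq, isConj_comm]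
  rw [hset, ← Nat.card_coe_set_eq]
  rfl

theorem carrier_one : (1 : ConjClasses G).carrier = {1} := by
  ext z
  rw [mem_carrier_iff_mk_eq, one_eq_mk_one, mk_eq_mk_iff_isConj, isConj_one_left,
    Set.mem_singleton_iff]

end ConjClasses

section

variable {G : Type*} [Group G] [Finite G]

theorem Group.card_lt_mul_card_conjClasses {n : ℕ} (hn : 1 < n)
    (hle : ∀ c : ConjClasses G, c.carrier.ncard ≤ n) :
    Nat.card G < n * Nat.card (ConjClasses G) := by
  classical
  cases nonempty_fintype G
  simp only [Nat.card_eq_fintype_card]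
  rw [← sum_conjClasses_card_eq_card, mul_comm, ← smul_eq_mul, ← Finset.card_univ,
    ← Finset.sum_const]
  refine Finset.sum_lt_sum (fun c _ ↦ ?_) ⟨1, Finset.mem_univ _, ?_⟩
  · rw [← Set.ncard_eq_toFinset_card']
    exact hle c
  · simpa [ConjClasses.carrier_one] using hn

theorem one_div_lt_commProb {n : ℕ} (hn : 1 < n)
    (hle : ∀ c : ConjClasses G, c.carrier.ncard ≤ n) :
    1 / (n : ℚ) < commProb G := by
  have hG : (0 : ℚ) < Nat.card G := by exact_mod_cast Nat.card_pos
  have hn0 : (0 : ℚ) < n := by exact_mod_cast (zero_lt_one.trans hn)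
  rw [commProb_def', div_lt_div_iff₀ hn0 hG, one_mul, mul_comm]
  exact_mod_cast Group.card_lt_mul_card_conjClasses hn hle

end

theorem stmt_18_general {G : Type*} [Group G] [Finite G] (p : ℕ) (hp : p.Prime)
    (htwo : ∀ x : G,
      Nat.card {z : G // IsConj x z} = 1 ∨ Nat.card {z : G // IsConj x z} = p) :
    commProb' G > 1 / (p : ℚ) := by
  refine one_div_lt_commProb hp.one_lt fun c ↦ ?_
  obtain ⟨x, rfl⟩ := c.exists_rep
  rw [ConjClasses.ncard_carrier_mk]
  rcases htwo x with h | h <;> rw [h]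
  exact hp.one_lt.le

theorem stmt_18 {G : Type*} [Group G] [Finite G] (p : ℕ) (hp : p.Prime)
    (htwo : ∀ x : G,
      Nat.card {z : G // IsConj x z} = 1 ∨ Nat.card {z : G // IsConj x z} = p)
    (hocc : ∃ x : G, Nat.card {z : G // IsConj x z} = p) :
    commProb' G > 1 / (p : ℚ) :=
  stmt_18_general p hp htwo
end

section
/- Let H be a finite p-group such that for all x ∈ H \ Z(H), [x,H] = K(H) (the set of all commutators), and suppose H has nilpotency class 3. Then γ₂(H) ≤ γ₃(H), a contradiction; hence any finite p-group of class 2 or 3 satisfying [x,H] = K(H) for all noncentral x must have class exactly 2. -/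
/-!
If some `u ∈ γ₂(G)` is not central, then `[u, G] ⊆ γ₃(G)`, so the hypothesis `[u, G] = K(G)` puts
every commutator, hence all of `γ₂(G)`, inside `γ₃(G)`. The lower central series is then constant
from `γ₂(G)` on, and since it reaches `1` in a nilpotent group, `γ₂(G) = 1`, contradicting that
`u` is not central. So `γ₂(G) ≤ Z(G)`, i.e. `G` has class at most `2`.
-/

open Group
open scoped commutatorElement

section

variable {G : Type*} [Group G]

/-- Translates the convention `[x, y] = x⁻¹ y⁻¹ x y` into Mathlib's `⁅x, y⁆ = x y x⁻¹ y⁻¹`. -/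
lemma inv_mul_inv_mul_mul_eq_commutatorElement (x y : G) : x⁻¹ * y⁻¹ * x * y = ⁅x⁻¹, y⁻¹⁆ := by
  rw [commutatorElement_def, inv_inv, inv_inv]

lemma setOf_exists_inv_mul_inv_mul_mul_eq (x : G) :
    {z | ∃ y, x⁻¹ * y⁻¹ * x * y = z} = Set.range (⁅x⁻¹, ·⁆) := by
  ext z
  constructor
  · rintro ⟨y, rfl⟩
    exact ⟨y⁻¹, (inv_mul_inv_mul_mul_eq_commutatorElement x y).symm⟩
  · rintro ⟨y, rfl⟩
    exact ⟨y⁻¹, by rw [inv_mul_inv_mul_mul_eq_commutatorElement, inv_inv]⟩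

lemma setOf_exists_inv_mul_inv_mul_mul_eq_commutatorSet :
    {z : G | ∃ a b, a⁻¹ * b⁻¹ * a * b = z} = commutatorSet G := by
  ext z
  constructor
  · rintro ⟨a, b, rfl⟩
    exact ⟨a⁻¹, b⁻¹, (inv_mul_inv_mul_mul_eq_commutatorElement a b).symm⟩
  · rintro ⟨a, b, rfl⟩
    exact ⟨a⁻¹, b⁻¹, by rw [inv_mul_inv_mul_mul_eq_commutatorElement, inv_inv, inv_inv]⟩

lemma commutator_le_lowerCentralSeries_succ {n : ℕ} {u : G}
    (hu : u ∈ (⊤ : Subgroup G).lowerCentralSeries n) (h : commutatorSet G ⊆ Set.range (⁅u, ·⁆)) :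
    commutator G ≤ (⊤ : Subgroup G).lowerCentralSeries (n + 1) := by
  rw [commutator_eq_closure, Subgroup.closure_le]
  rintro _ hz
  obtain ⟨y, rfl⟩ := h hz
  exact Subgroup.commutator_mem_commutator hu (Subgroup.mem_top y)

lemma lowerCentralSeries_le_add_of_le_succ {S : Subgroup G} {n : ℕ}
    (h : S.lowerCentralSeries n ≤ S.lowerCentralSeries (n + 1)) (k : ℕ) :
    S.lowerCentralSeries n ≤ S.lowerCentralSeries (n + k) := by
  induction k with
  | zero => rfl
  | succ k ih =>
    calc S.lowerCentralSeries n ≤ S.lowerCentralSeries (n + 1) := h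
      _ ≤ S.lowerCentralSeries (n + k + 1) := Subgroup.commutator_mono ih le_rfl

theorem nilpotencyClass_le_two_of_range_commutatorElement_eq [IsNilpotent G]
    (h : ∀ x ∉ Subgroup.center G, Set.range (⁅x, ·⁆) = commutatorSet G) :
    nilpotencyClass G ≤ 2 := by
  rw [← Subgroup.lowerCentralSeries_eq_bot_iff_nilpotencyClass_le, Subgroup.lowerCentralSeries_succ,
    Subgroup.commutator_top_right_eq_bot_iff_le_center]
  by_contra hnot
  obtain ⟨u, hu, hu_center⟩ := SetLike.not_le_iff_exists.mp hnot
  have hstable :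
      (⊤ : Subgroup G).lowerCentralSeries 1 ≤ (⊤ : Subgroup G).lowerCentralSeries (1 + 1) :=
    commutator_le_lowerCentralSeries_succ hu (h u hu_center).ge
  have hbot : (⊤ : Subgroup G).lowerCentralSeries (1 + nilpotencyClass G) = ⊥ :=
    Subgroup.lowerCentralSeries_eq_bot_iff_nilpotencyClass_le.mpr (Nat.le_add_left _ _)
  exact hnot ((lowerCentralSeries_le_add_of_le_succ hstable _).trans (hbot ▸ bot_le))

end

theorem stmt_19_general {H : Type*} [Group H] [Group.IsNilpotent H]
    (hx : ∀ x : H, x ∉ Subgroup.center H →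
      {z : H | ∃ y : H, x⁻¹ * y⁻¹ * x * y = z} =
        {z : H | ∃ a b : H, a⁻¹ * b⁻¹ * a * b = z})
    (hclass : Group.nilpotencyClass H = 2 ∨ Group.nilpotencyClass H = 3) :
    Group.nilpotencyClass H = 2 := by
  have hle : nilpotencyClass H ≤ 2 :=
    nilpotencyClass_le_two_of_range_commutatorElement_eq fun x hx_center => by
      have := hx x⁻¹ (by rwa [Subgroup.inv_mem_iff])
      rwa [setOf_exists_inv_mul_inv_mul_mul_eq, setOf_exists_inv_mul_inv_mul_mul_eq_commutatorSet,
        inv_inv] at this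
  omega

theorem stmt_19 {H : Type*} [Group H] [Finite H] (p : ℕ) [Fact p.Prime]
    (hp : IsPGroup p H) [Group.IsNilpotent H]
    (hx : ∀ x : H, x ∉ Subgroup.center H →
      {z : H | ∃ y : H, x⁻¹ * y⁻¹ * x * y = z} =
        {z : H | ∃ a b : H, a⁻¹ * b⁻¹ * a * b = z})
    (hclass : Group.nilpotencyClass H = 2 ∨ Group.nilpotencyClass H = 3) :
    Group.nilpotencyClass H = 2 :=
  stmt_19_general hx hclass
end
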